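/- Let n be a positive integer, let i be an integer with 1 ≤ i ≤ ⌈n/2⌉, and let t be a positive integer with t ≤ n²/4 and t ≡ n − i (mod 2). Let A be the number of walks of length t started at i with w(t) = n and MAX(w) = n, let F be the number of walks of length t started at i with MIN(w) < 1, and let A' be the number of walks of length t started at i with w(t) = n, MAX(w) = n, and MIN(w) < 1. Then A · F ≥ 2^t · A'. (Equivalently, Pr_i^t[w(t) = n and MAX(w) = n] ≥ Pr_i^t[w(t) = n and MAX(w) = n | MIN(w) < 1] whenever the conditional probability is defined.) -/

import Mathlib

/-- A 1D walk of length `t` started at `i`: a function on `{0,…,t}` starting at `i`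
whose consecutive values differ by exactly `1`. -/
def IsWalk (i : ℤ) (t : ℕ) (w : Fin (t + 1) → ℤ) : Prop :=
  w 0 = i ∧ ∀ j : Fin t, |w j.succ - w j.castSucc| = 1

/-- The number of walks of length `t` started at `i` satisfying `P`. -/
noncomputable def walkCount (i : ℤ) (t : ℕ) (P : (Fin (t + 1) → ℤ) → Prop) : ℕ :=
  {w : Fin (t + 1) → ℤ | IsWalk i t w ∧ P w}.ncard

/-- `Pr_i^t[P]`: the number of walks of length `t` started at `i` satisfying `P`,
divided by `2 ^ t`. -/
noncomputable def walkProb (i : ℤ) (t : ℕ) (P : (Fin (t + 1) → ℤ) → Prop) : ℝ :=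
  (walkCount i t P : ℝ) / 2 ^ t

/-- `w(t) = n`. -/
def endsAt {t : ℕ} (n : ℤ) (w : Fin (t + 1) → ℤ) : Prop := w (Fin.last t) = n

/-- `MAX(w) = n`. -/
def maxEq {t : ℕ} (n : ℤ) (w : Fin (t + 1) → ℤ) : Prop :=
  (∀ j, w j ≤ n) ∧ ∃ j, w j = n

/-- `MIN(w) ≥ m`. -/
def minGE {t : ℕ} (m : ℤ) (w : Fin (t + 1) → ℤ) : Prop := ∀ j, m ≤ w j

/-!
Encode a walk by its steps `ε : Fin t → Bool`, and let `B(m, a)` be the number of walks of length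
`m` from `a` to `n` with maximum `n`; by the reflection principle it is a ballot number
`C(m, k) - C(m, k + 1)`. A walk from `i ≥ 1` that goes below `1` first reaches `0` at a unique time
`s`, necessarily of the form `s = 2u + i`. Cutting walks at that time, the walks counted by `F`
are all pairs (first-passage prefix of length `s`, arbitrary suffix), while those counted by `A'`
inject into pairs (first-passage prefix, walk counted by `B(t - s, 0)`). It therefore suffices that
`2 ^ s * B(t - s, 0) ≤ B(t, i) = A`. This follows by composing `4 * B(m, a) ≤ B(m + 2, a)`
(`u` times) and `2 * B(m, a) ≤ B(m + 1, a + 1)` (`i` times), binomial estimates that hold while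
`4m` stays below roughly `(n - a) ^ 2`: this is where `t ≤ n ^ 2 / 4` and `2i ≤ n + 1` enter.
-/

open Finset

namespace StepWalk

def step (b : Bool) : ℤ := if b then 1 else -1

def height (i : ℤ) (η : ℕ → Bool) (j : ℕ) : ℤ := i + ∑ l ∈ range j, step (η l)

@[simp] lemma height_zero (i : ℤ) (η : ℕ → Bool) : height i η 0 = i := by simp [height]

lemma height_succ (i : ℤ) (η : ℕ → Bool) (j : ℕ) :
    height i η (j + 1) = height i η j + step (η j) := by
  simp [height, sum_range_succ, add_assoc]

lemma height_congr {i : ℤ} {η η' : ℕ → Bool} {j : ℕ} (h : ∀ l < j, η l = η' l) :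
    height i η j = height i η' j := by
  unfold height
  rw [sum_congr rfl fun l hl => by rw [h l (mem_range.mp hl)]]

/-- Only the first `t` steps are ever read; the padding lets `height` take `ℕ`-indexed sequences. -/
def pad {t : ℕ} (ε : Fin t → Bool) (l : ℕ) : Bool := if h : l < t then ε ⟨l, h⟩ else true

lemma pad_of_lt {t : ℕ} (ε : Fin t → Bool) {l : ℕ} (h : l < t) : pad ε l = ε ⟨l, h⟩ := dif_pos h

def toWalk (i : ℤ) (t : ℕ) (ε : Fin t → Bool) : Fin (t + 1) → ℤ := fun j => height i (pad ε) j

lemma toWalk_succ (i : ℤ) {t : ℕ} (ε : Fin t → Bool) (j : Fin t) :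
    toWalk i t ε j.succ = toWalk i t ε j.castSucc + step (ε j) := by
  simp [toWalk, height_succ, pad_of_lt ε j.2]

lemma isWalk_toWalk (i : ℤ) (t : ℕ) (ε : Fin t → Bool) : IsWalk i t (toWalk i t ε) :=
  ⟨by simp [toWalk], fun j => by rw [toWalk_succ]; cases ε j <;> simp [step]⟩

lemma toWalk_injective (i : ℤ) (t : ℕ) : Function.Injective (toWalk i t) := by
  intro ε ε' h
  funext j
  have := toWalk_succ i ε j
  rw [h, toWalk_succ, add_right_inj] at this
  cases hε : ε j <;> cases hε' : ε' j <;> simp_all [step]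

lemma exists_toWalk_eq {i : ℤ} {t : ℕ} {w : Fin (t + 1) → ℤ} (hw : IsWalk i t w) :
    ∃ ε, toWalk i t ε = w := by
  refine ⟨fun j => decide (w j.succ = w j.castSucc + 1), funext fun j => ?_⟩
  induction j using Fin.induction with
  | zero => simpa [toWalk] using hw.1.symm
  | succ j ih =>
    rw [toWalk_succ, ih]
    rcases abs_eq_abs.mp ((hw.2 j).trans abs_one.symm) with h | h <;>
      by_cases hup : w j.succ = w j.castSucc + 1 <;> simp [step, hup] <;> omega

lemma walkCount_eq_card {i : ℤ} {t : ℕ} {P : (Fin (t + 1) → ℤ) → Prop}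
    (S : Finset (Fin t → Bool)) (hS : ∀ ε, ε ∈ S ↔ P (toWalk i t ε)) :
    walkCount i t P = #S := by
  have : {w | IsWalk i t w ∧ P w} = toWalk i t '' S := by
    ext w
    constructor
    · rintro ⟨hw, hP⟩
      obtain ⟨ε, rfl⟩ := exists_toWalk_eq hw
      exact ⟨ε, (hS ε).mpr hP, rfl⟩
    · rintro ⟨ε, hε, rfl⟩
      exact ⟨isWalk_toWalk i t ε, (hS ε).mp hε⟩
  rw [walkCount, this, Set.ncard_image_of_injective _ (toWalk_injective i t), Set.ncard_coe_finset]

lemma height_pad_self {t : ℕ} (i : ℤ) (ε : Fin t → Bool) :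
    height i (pad ε) t = i + 2 * #{l | ε l} - t := by
  have hstep : ∀ b, step b = 2 * (if b then 1 else 0) - 1 := by decide
  rw [height, sum_range fun l => step (pad ε l)]
  simp only [pad_of_lt ε (Fin.is_lt _), Fin.eta, hstep, sum_sub_distrib, ← mul_sum, sum_boole,
    sum_const, card_univ, Fintype.card_fin, Int.nsmul_eq_mul, mul_one]
  ring

lemma card_ones_eq (m k : ℕ) : #{ε : Fin m → Bool | #{l | ε l} = k} = m.choose k := by
  have hbij : #{ε : Fin m → Bool | #{l | ε l} = k} = #(powersetCard k (univ : Finset (Fin m))) := by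
    refine card_nbij' (fun ε => ({l | ε l} : Finset (Fin m))) (fun S l => decide (l ∈ S))
      ?_ ?_ ?_ ?_
    · intro ε hε; simpa [mem_powersetCard] using hε
    · intro S hS; simp_all [mem_powersetCard]
    · intro ε _; funext l; simp
    · intro S _; ext l; simp
  simp [hbij]

lemma exists_height_eq {i v : ℤ} {η : ℕ → Bool} {m : ℕ} (hi : i ≤ v) (hm : v ≤ height i η m) :
    ∃ j ≤ m, height i η j = v := by
  induction m with
  | zero => exact ⟨0, le_rfl, by simp at hm ⊢; omega⟩
  | succ m ih =>
    by_cases hv : v ≤ height i η m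
    · obtain ⟨j, hj, hjv⟩ := ih hv
      exact ⟨j, by omega, hjv⟩
    · refine ⟨m + 1, le_rfl, ?_⟩
      rw [height_succ] at hm ⊢
      cases hη : η m <;> simp [step, hη] at hm ⊢ <;> omega

def flipFrom (s : ℕ) (η : ℕ → Bool) (l : ℕ) : Bool := if l < s then η l else !η l

lemma height_flipFrom_of_le (i : ℤ) (η : ℕ → Bool) {s j : ℕ} (hj : j ≤ s) :
    height i (flipFrom s η) j = height i η j :=
  height_congr fun l hl => if_pos (by omega)

lemma height_flipFrom_of_ge (i : ℤ) (η : ℕ → Bool) {s j : ℕ} (hj : s ≤ j) :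
    height i (flipFrom s η) j = 2 * height i η s - height i η j := by
  induction j, hj using Nat.le_induction with
  | base => rw [height_flipFrom_of_le i η le_rfl]; ring
  | succ j hj ih =>
    rw [height_succ, height_succ, ih, flipFrom, if_neg (by omega)]
    cases η j <;> simp [step] <;> ring

def hitTime (i v : ℤ) {m : ℕ} (ε : Fin m → Bool) : ℕ :=
  Nat.find (⟨m, Or.inr rfl⟩ : ∃ j, height i (pad ε) j = v ∨ j = m)

/-- Reflects the walk in the level `v` after its first visit there; a walk that never visits `v`
has `hitTime = m` and is left unchanged. -/
def reflectAfterHit (i v : ℤ) {m : ℕ} (ε : Fin m → Bool) : Fin m → Bool :=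
  fun l => if (l : ℕ) < hitTime i v ε then ε l else !ε l

section Reflection

variable {i v : ℤ} {m : ℕ} (ε : Fin m → Bool)

lemma hitTime_le : hitTime i v ε ≤ m := Nat.find_min' _ (Or.inr rfl)

lemma hitTime_spec : height i (pad ε) (hitTime i v ε) = v ∨ hitTime i v ε = m :=
  Nat.find_spec (⟨m, Or.inr rfl⟩ : ∃ j, height i (pad ε) j = v ∨ j = m)

lemma height_hitTime (h : ∃ j ≤ m, height i (pad ε) j = v) :
    height i (pad ε) (hitTime i v ε) = v := by
  obtain ⟨j, hjm, hj⟩ := h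
  have hle : hitTime i v ε ≤ j := Nat.find_min' _ (Or.inl hj)
  rcases hitTime_spec ε with h | h
  · exact h
  · obtain rfl : j = m := by omega
    rwa [h]

lemma height_reflectAfterHit {j : ℕ} (hj : j ≤ m) :
    height i (pad (reflectAfterHit i v ε)) j = height i (flipFrom (hitTime i v ε) (pad ε)) j :=
  height_congr fun l hl => by
    simp only [pad_of_lt _ (show l < m by omega), reflectAfterHit, flipFrom]

lemma hitTime_reflectAfterHit : hitTime i v (reflectAfterHit i v ε) = hitTime i v ε := by
  have hagree : ∀ j ≤ hitTime i v ε,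
      height i (pad (reflectAfterHit i v ε)) j = height i (pad ε) j := fun j hj => by
    rw [height_reflectAfterHit ε (hj.trans (hitTime_le ε)), height_flipFrom_of_le i _ hj]
  rw [hitTime, Nat.find_eq_iff, hagree _ le_rfl]
  refine ⟨hitTime_spec ε, ?_⟩
  intro j hj
  rw [hagree j hj.le]
  exact Nat.find_min _ hj

lemma reflectAfterHit_reflectAfterHit : reflectAfterHit i v (reflectAfterHit i v ε) = ε := by
  funext l
  simp only [reflectAfterHit, hitTime_reflectAfterHit]
  split_ifs <;> simp

lemma height_reflectAfterHit_self (h : ∃ j ≤ m, height i (pad ε) j = v) :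
    height i (pad (reflectAfterHit i v ε)) m = 2 * v - height i (pad ε) m := by
  rw [height_reflectAfterHit ε le_rfl, height_flipFrom_of_ge i _ (hitTime_le ε),
    height_hitTime ε h]

end Reflection

def endAt (i : ℤ) (m : ℕ) (y : ℤ) : Finset (Fin m → Bool) := {ε | height i (pad ε) m = y}

lemma card_endAt (i : ℤ) (m k : ℕ) : #(endAt i m (i + 2 * k - m)) = m.choose k := by
  rw [← card_ones_eq]
  congr 1
  ext ε
  simp [endAt, height_pad_self]

/-- The reflection principle: `reflectAfterHit` is an involution exchanging the two sides. -/
lemma card_endAt_filter_reaches {i v y : ℤ} {m : ℕ} (hi : i < v) (hy : y < v) :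
    #{ε ∈ endAt i m y | ∃ j ≤ m, v ≤ height i (pad ε) j} = #(endAt i m (2 * v - y)) := by
  have hit_of_reaches : ∀ ε : Fin m → Bool, (∃ j ≤ m, v ≤ height i (pad ε) j) →
      ∃ j ≤ m, height i (pad ε) j = v := by
    rintro ε ⟨j, hjm, hj⟩
    obtain ⟨j', hj', hj'v⟩ := exists_height_eq hi.le hj
    exact ⟨j', hj'.trans hjm, hj'v⟩
  refine card_nbij' (reflectAfterHit i v) (reflectAfterHit i v) ?_ ?_
    (fun ε _ => reflectAfterHit_reflectAfterHit ε) (fun ε _ => reflectAfterHit_reflectAfterHit ε)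
  · intro ε hε
    simp only [endAt, coe_filter, mem_filter, mem_univ, true_and, Set.mem_ofPred_eq] at hε ⊢
    rw [height_reflectAfterHit_self ε (hit_of_reaches ε hε.2), hε.1]
  · intro ε hε
    simp only [endAt, coe_filter, mem_filter, mem_univ, true_and, Set.mem_ofPred_eq] at hε ⊢
    have hhit := hit_of_reaches ε ⟨m, le_rfl, by omega⟩
    refine ⟨by rw [height_reflectAfterHit_self ε hhit, hε]; ring, hitTime i v ε, hitTime_le ε, ?_⟩
    rw [height_reflectAfterHit ε (hitTime_le ε), height_flipFrom_of_le i _ le_rfl,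
      height_hitTime ε hhit]

def maxAtEnd (i : ℤ) (m : ℕ) (y : ℤ) : Finset (Fin m → Bool) :=
  {ε | height i (pad ε) m = y ∧ ∀ j ≤ m, height i (pad ε) j ≤ y}

lemma mem_maxAtEnd_iff {i y : ℤ} {t : ℕ} {ε : Fin t → Bool} :
    ε ∈ maxAtEnd i t y ↔ endsAt y (toWalk i t ε) ∧ maxEq y (toWalk i t ε) := by
  simp only [maxAtEnd, mem_filter, mem_univ, true_and, endsAt, maxEq, toWalk, Fin.val_last]
  constructor
  · rintro ⟨hend, hmax⟩
    exact ⟨hend, ⟨fun j => hmax j (Nat.le_of_lt_succ j.2), Fin.last t, hend⟩⟩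
  · rintro ⟨hend, hmax, -⟩
    exact ⟨hend, fun j hj => hmax ⟨j, Nat.lt_succ_of_le hj⟩⟩

def ballot (m k : ℕ) : ℤ := m.choose k - m.choose (k + 1)

lemma card_maxAtEnd {i : ℤ} {m k : ℕ} (hk : m ≤ 2 * k) :
    (#(maxAtEnd i m (i + 2 * k - m)) : ℤ) = ballot m k := by
  set y := i + 2 * k - m
  have hsplit := card_filter_add_card_filter_not (s := endAt i m y)
    (fun ε => ∃ j ≤ m, y + 1 ≤ height i (pad ε) j)
  have hmax : {ε ∈ endAt i m y | ¬∃ j ≤ m, y + 1 ≤ height i (pad ε) j} = maxAtEnd i m y := by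
    ext ε
    simp only [endAt, maxAtEnd, mem_filter, mem_univ, true_and, not_exists, not_and, not_le,
      Int.lt_add_one_iff]
  rw [hmax, card_endAt_filter_reaches (by omega) (by omega),
    show 2 * (y + 1) - y = i + 2 * ↑(k + 1) - m by push_cast; ring, card_endAt,
    card_endAt] at hsplit
  rw [ballot, ← hsplit]
  push_cast
  ring

lemma choose_succ_right_mul_intCast (m k : ℕ) :
    (m.choose (k + 1) : ℤ) * (k + 1) = m.choose k * (m - k) := by
  rcases le_or_gt k m with hk | hk
  · have := congrArg (Nat.cast (R := ℤ)) (Nat.choose_succ_right_eq m k)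
    push_cast [hk] at this
    exact this
  · simp [Nat.choose_eq_zero_of_lt hk, Nat.choose_eq_zero_of_lt (Nat.lt_succ_of_lt hk)]

lemma succ_choose_mul_intCast (m k : ℕ) :
    ((m + 1).choose k : ℤ) * (m + 1 - k) = (m + 1) * m.choose k := by
  rcases le_or_gt k (m + 1) with hk | hk
  · have := congrArg (Nat.cast (R := ℤ)) (Nat.choose_mul_succ_eq m k)
    push_cast [hk] at this
    linarith
  · simp [Nat.choose_eq_zero_of_lt hk, Nat.choose_eq_zero_of_lt (show m < k by omega)]

lemma succ_mul_ballot (m k : ℕ) : (k + 1 : ℤ) * ballot m k = (2 * k + 1 - m) * m.choose k := by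
  rw [ballot]
  linear_combination -choose_succ_right_mul_intCast m k

lemma ballot_eq_zero_of_lt {m k : ℕ} (hk : m < k) : ballot m k = 0 := by
  simp [ballot, Nat.choose_eq_zero_of_lt hk, Nat.choose_eq_zero_of_lt (Nat.lt_succ_of_lt hk)]

lemma ballot_nonneg {m k : ℕ} (hmk : m ≤ 2 * k + 1) : 0 ≤ ballot m k := by
  have h := succ_mul_ballot m k
  have : (0 : ℤ) ≤ (2 * k + 1 - m) * m.choose k := mul_nonneg (by omega) (by positivity)
  nlinarith

lemma two_mul_ballot_le {m k : ℕ} (hmk : m ≤ 2 * k) (h : (m : ℤ) + 2 ≤ (2 * k - m) ^ 2) :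
    2 * ballot m k ≤ ballot (m + 1) k := by
  rcases le_or_gt k m with hk | hk
  · have key : ((k + 1) * (m + 1 - k) : ℤ) * (ballot (m + 1) k - 2 * ballot m k) =
        ((2 * k - m) ^ 2 - (m + 2)) * m.choose k := by
      have := succ_mul_ballot (m + 1) k
      push_cast at this
      linear_combination (m + 1 - k : ℤ) * this - 2 * (m + 1 - k : ℤ) * succ_mul_ballot m k +
        (2 * k - m : ℤ) * succ_choose_mul_intCast m k
    have hpos : (0 : ℤ) < (k + 1) * (m + 1 - k) := mul_pos (by positivity) (by omega)
    have hnn : (0 : ℤ) ≤ ((2 * k - m) ^ 2 - (m + 2)) * m.choose k :=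
      mul_nonneg (by linarith) (by positivity)
    rw [← key] at hnn
    linarith [(mul_nonneg_iff_of_pos_left hpos).mp hnn]
  · rw [ballot_eq_zero_of_lt hk, mul_zero]
    exact ballot_nonneg (by omega)

lemma four_mul_ballot_le {m k : ℕ} (hmk : m ≤ 2 * k)
    (h : 3 * ((m : ℤ) + 2) ≤ (2 * k - m) ^ 2 + 2 * (2 * k - m)) :
    4 * ballot m k ≤ ballot (m + 2) (k + 1) := by
  rcases le_or_gt k m with hk | hk
  · have key : ((k + 1) * (k + 2) * (m + 1 - k) : ℤ) * (ballot (m + 2) (k + 1) - 4 * ballot m k) =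
        (2 * k - m + 1) * ((2 * k - m) ^ 2 + 2 * (2 * k - m) - 3 * (m + 2)) * m.choose k := by
      have e2 := succ_mul_ballot (m + 2) (k + 1)
      have e3 := congrArg (Nat.cast (R := ℤ)) (Nat.add_one_mul_choose_eq (m + 1) k)
      push_cast at e2 e3
      linear_combination (k + 1 : ℤ) * (m + 1 - k) * e2 - 4 * (k + 2 : ℤ) * (m + 1 - k) *
        succ_mul_ballot m k - (m + 1 - k : ℤ) * (2 * k - m + 1) * e3 +
        (2 * k - m + 1 : ℤ) * (m + 2) * succ_choose_mul_intCast m k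
    have hpos : (0 : ℤ) < (k + 1) * (k + 2) * (m + 1 - k) := mul_pos (by positivity) (by omega)
    have hnn : (0 : ℤ) ≤
        (2 * k - m + 1) * ((2 * k - m) ^ 2 + 2 * (2 * k - m) - 3 * (m + 2)) * m.choose k :=
      mul_nonneg (mul_nonneg (by omega) (by linarith)) (by positivity)
    rw [← key] at hnn
    linarith [(mul_nonneg_iff_of_pos_left hpos).mp hnn]
  · rw [ballot_eq_zero_of_lt hk, mul_zero]
    exact ballot_nonneg (by omega)

lemma two_pow_mul_ballot_le {m k v : ℕ} (hv : 2 * (v : ℤ) ≤ 2 * k - m + 1)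
    (h : 4 * ((m : ℤ) + v) ≤ (2 * k - m) ^ 2) :
    2 ^ v * ballot m k ≤ ballot (m + v) k := by
  induction v with
  | zero => simp
  | succ v ih =>
    push_cast at hv h
    have hd : 2 ≤ 2 * (k : ℤ) - m := by nlinarith
    have hstep : 2 * ballot (m + v) k ≤ ballot (m + v + 1) k := by
      refine two_mul_ballot_le (by omega) ?_
      push_cast
      nlinarith
    calc 2 ^ (v + 1) * ballot m k = 2 * (2 ^ v * ballot m k) := by ring
      _ ≤ 2 * ballot (m + v) k := by gcongr; exact ih (by linarith) (by linarith)
      _ ≤ ballot (m + (v + 1)) k := hstep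

lemma four_pow_mul_ballot_le {m k u : ℕ} (hmk : m ≤ 2 * k)
    (h : 3 * ((m : ℤ) + 2 * u) ≤ (2 * k - m) ^ 2 + 2 * (2 * k - m)) :
    4 ^ u * ballot m k ≤ ballot (m + 2 * u) (k + u) := by
  induction u with
  | zero => simp
  | succ u ih =>
    push_cast at h
    have hstep : 4 * ballot (m + 2 * u) (k + u) ≤ ballot (m + 2 * u + 2) (k + u + 1) := by
      refine four_mul_ballot_le (by omega) ?_
      push_cast
      linear_combination h
    calc 4 ^ (u + 1) * ballot m k = 4 * (4 ^ u * ballot m k) := by ring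
      _ ≤ 4 * ballot (m + 2 * u) (k + u) := by gcongr; exact ih (by linarith)
      _ ≤ ballot (m + 2 * (u + 1)) (k + (u + 1)) := hstep

lemma pow_mul_ballot_le {m k u v : ℕ} (hmk : m ≤ 2 * k) (hv : 2 * (v : ℤ) ≤ 2 * k - m + 1)
    (h : 4 * ((m : ℤ) + 2 * u + v) ≤ (2 * k - m) ^ 2) :
    2 ^ (2 * u + v) * ballot m k ≤ ballot (m + 2 * u + v) (k + u) := by
  have hd : (2 * ((k + u : ℕ) : ℤ) - (m + 2 * u : ℕ)) = 2 * k - m := by push_cast; ring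
  calc 2 ^ (2 * u + v) * ballot m k = 2 ^ v * (4 ^ u * ballot m k) := by
        rw [pow_add, pow_mul]; ring
    _ ≤ 2 ^ v * ballot (m + 2 * u) (k + u) := by
      gcongr
      exact four_pow_mul_ballot_le hmk (by nlinarith)
    _ ≤ ballot (m + 2 * u + v) (k + u) :=
      two_pow_mul_ballot_le (by rw [hd]; exact hv) (by rw [hd]; push_cast; linarith)

section Append

variable {s r : ℕ} (π : Fin s → Bool) (τ : Fin r → Bool)

lemma pad_append_of_lt {l : ℕ} (hl : l < s) : pad (Fin.append π τ) l = pad π l := by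
  rw [pad_of_lt _ (by omega), pad_of_lt _ hl]
  exact Fin.append_left π τ ⟨l, hl⟩

lemma pad_append_add (l : ℕ) : pad (Fin.append π τ) (s + l) = pad τ l := by
  by_cases hl : l < r
  · rw [pad_of_lt _ (by omega), pad_of_lt _ hl]
    exact Fin.append_right π τ ⟨l, hl⟩
  · simp [pad, hl]

lemma height_append_of_le (i : ℤ) {j : ℕ} (hj : j ≤ s) :
    height i (pad (Fin.append π τ)) j = height i (pad π) j :=
  height_congr fun l hl => pad_append_of_lt π τ (by omega)

lemma height_append_add (i : ℤ) (j : ℕ) :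
    height i (pad (Fin.append π τ)) (s + j) = height (height i (pad π) s) (pad τ) j := by
  induction j with
  | zero => simpa using height_append_of_le π τ i le_rfl
  | succ j ih => rw [← add_assoc, height_succ, height_succ, ih, pad_append_add]

end Append

def firstZeroAt (i : ℤ) (t s : ℕ) : Finset (Fin t → Bool) :=
  {ε | height i (pad ε) s = 0 ∧ ∀ j < s, 0 < height i (pad ε) j}

lemma append_mem_firstZeroAt {i : ℤ} {s r : ℕ} (π : Fin s → Bool) (τ : Fin r → Bool) :
    Fin.append π τ ∈ firstZeroAt i (s + r) s ↔ π ∈ firstZeroAt i s s := by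
  simp only [firstZeroAt, mem_filter, mem_univ, true_and, height_append_of_le π τ i le_rfl]
  refine and_congr_right fun _ => forall₂_congr fun j hj => ?_
  rw [height_append_of_le π τ i hj.le]

lemma card_firstZeroAt (i : ℤ) {s t : ℕ} (hst : s ≤ t) :
    #(firstZeroAt i t s) = #(firstZeroAt i s s) * 2 ^ (t - s) := by
  obtain ⟨r, rfl⟩ := Nat.exists_eq_add_of_le hst
  have hequiv :
      #(firstZeroAt i s s ×ˢ (univ : Finset (Fin r → Bool))) = #(firstZeroAt i (s + r) s) :=
    card_equiv (Fin.appendEquiv s r) fun ⟨π, τ⟩ => by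
      rw [mem_product, and_iff_left (mem_univ τ)]
      exact (append_mem_firstZeroAt π τ).symm
  simp [← hequiv, card_product]

lemma card_maxAtEnd_inter_firstZeroAt_le (i y : ℤ) {s t : ℕ} (hst : s ≤ t) :
    #(maxAtEnd i t y ∩ firstZeroAt i t s) ≤ #(firstZeroAt i s s) * #(maxAtEnd 0 (t - s) y) := by
  obtain ⟨r, rfl⟩ := Nat.exists_eq_add_of_le hst
  rw [Nat.add_sub_cancel_left, ← card_product]
  refine card_le_card_of_injOn (Fin.appendEquiv s r).symm ?_
    (Fin.appendEquiv s r).symm.injective.injOn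
  intro ε hε
  obtain ⟨⟨π, τ⟩, rfl⟩ := (Fin.appendEquiv s r).surjective ε
  rw [coe_inter, Set.mem_inter_iff, mem_coe, mem_coe, show (Fin.appendEquiv s r) (π, τ) =
    Fin.append π τ from rfl, append_mem_firstZeroAt] at hε
  obtain ⟨hmax, hπ⟩ := hε
  have hπ0 : height i (pad π) s = 0 := (mem_filter.mp hπ).2.1
  have hτ : ∀ j, height 0 (pad τ) j = height i (pad (Fin.append π τ)) (s + j) := fun j => by
    rw [height_append_add, hπ0]
  simp only [maxAtEnd, mem_filter, mem_univ, true_and] at hmax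
  simp only [Equiv.symm_apply_apply, mem_coe, mem_product, hπ, maxAtEnd, mem_filter, mem_univ,
    true_and, hτ]
  exact ⟨hmax.1, fun j hj => hmax.2 (s + j) (by omega)⟩

def belowOne (i : ℤ) (t : ℕ) : Finset (Fin t → Bool) := {ε | ∃ j ≤ t, height i (pad ε) j < 1}

lemma mem_belowOne_iff {i : ℤ} {t : ℕ} {ε : Fin t → Bool} :
    ε ∈ belowOne i t ↔ ∃ j, toWalk i t ε j < 1 := by
  simp only [belowOne, mem_filter, mem_univ, true_and, toWalk]
  constructor
  · rintro ⟨j, hj, hlow⟩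
    exact ⟨⟨j, Nat.lt_succ_of_le hj⟩, hlow⟩
  · rintro ⟨j, hlow⟩
    exact ⟨j, Nat.le_of_lt_succ j.2, hlow⟩

lemma exists_firstZeroAt {i : ℤ} (hi : 1 ≤ i) {t : ℕ} {ε : Fin t → Bool}
    (h : ∃ j ≤ t, height i (pad ε) j < 1) : ∃ s ≤ t, ε ∈ firstZeroAt i t s := by
  obtain ⟨j, hjt, hj⟩ := h
  have hex : ∃ j, height i (pad ε) j < 1 := ⟨j, hj⟩
  have hmin : ∀ l < Nat.find hex, 0 < height i (pad ε) l := fun l hl => by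
    have := Nat.find_min hex hl
    omega
  obtain ⟨s, hs⟩ : ∃ s, Nat.find hex = s + 1 := Nat.exists_eq_succ_of_ne_zero fun h0 => by
    have := Nat.find_spec hex
    rw [h0, height_zero] at this
    omega
  have hlow := Nat.find_spec hex
  have hprev := hmin s (by omega)
  rw [hs, height_succ] at hlow
  refine ⟨s + 1, hs ▸ (Nat.find_min' hex hj).trans hjt, ?_⟩
  simp only [firstZeroAt, mem_filter, mem_univ, true_and, height_succ]
  refine ⟨?_, hs ▸ hmin⟩
  cases hp : pad ε s <;> simp [step, hp] at hlow ⊢ <;> omega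

lemma firstZeroAt_disjoint (i : ℤ) (t : ℕ) {s s' : ℕ} (h : s ≠ s') :
    Disjoint (firstZeroAt i t s) (firstZeroAt i t s') := by
  rw [disjoint_left]
  intro ε hs hs'
  simp only [firstZeroAt, mem_filter, mem_univ, true_and] at hs hs'
  rcases lt_or_gt_of_ne h with hlt | hlt
  · exact (hs'.2 s hlt).ne' hs.1
  · exact (hs.2 s' hlt).ne' hs'.1

lemma belowOne_eq_biUnion {i : ℤ} (hi : 1 ≤ i) (t : ℕ) :
    belowOne i t = (range (t + 1)).biUnion (firstZeroAt i t) := by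
  ext ε
  simp only [mem_biUnion, mem_range, Nat.lt_succ_iff]
  constructor
  · intro hε
    exact exists_firstZeroAt hi (mem_filter.mp hε).2
  · rintro ⟨s, hst, hs⟩
    simp only [firstZeroAt, belowOne, mem_filter, mem_univ, true_and] at hs ⊢
    exact ⟨s, hst, by omega⟩

lemma card_belowOne {i : ℤ} (hi : 1 ≤ i) (t : ℕ) :
    #(belowOne i t) = ∑ s ∈ range (t + 1), #(firstZeroAt i s s) * 2 ^ (t - s) := by
  rw [belowOne_eq_biUnion hi, card_biUnion fun s _ s' _ h => firstZeroAt_disjoint i t h]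
  exact sum_congr rfl fun s hs => card_firstZeroAt i (by simpa [Nat.lt_succ_iff] using hs)

lemma card_maxAtEnd_inter_belowOne_le {i : ℤ} (hi : 1 ≤ i) (t : ℕ) (y : ℤ) :
    #(maxAtEnd i t y ∩ belowOne i t) ≤
      ∑ s ∈ range (t + 1), #(firstZeroAt i s s) * #(maxAtEnd 0 (t - s) y) := by
  rw [belowOne_eq_biUnion hi, inter_biUnion]
  exact card_biUnion_le.trans (sum_le_sum fun s hs =>
    card_maxAtEnd_inter_firstZeroAt_le i y (by simpa [Nat.lt_succ_iff] using hs))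

lemma two_pow_mul_card_maxAtEnd_le {n i s t : ℕ} (h2i : 2 * i ≤ n + 1) (ht : 4 * t ≤ n ^ 2)
    (hst : s ≤ t) (hs : (firstZeroAt i s s).Nonempty) :
    2 ^ s * #(maxAtEnd 0 (t - s) n) ≤ #(maxAtEnd i t n) := by
  obtain ⟨π, hπ⟩ := hs
  have hπ0 := (mem_filter.mp hπ).2.1
  rw [height_pad_self] at hπ0
  obtain ⟨u, hu⟩ : ∃ u, s = 2 * u + i := ⟨#{l | π l}, by omega⟩
  rcases (maxAtEnd 0 (t - s) n).eq_empty_or_nonempty with hG | ⟨τ, hτ⟩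
  · simp [hG]
  have hτn := (mem_filter.mp hτ).2.1
  rw [height_pad_self] at hτn
  set k := #{l | τ l}
  have hG : (#(maxAtEnd 0 (t - s) n) : ℤ) = ballot (t - s) k := by
    rw [← card_maxAtEnd (i := 0) (by omega), ← hτn]
  have hA : (#(maxAtEnd i t n) : ℤ) = ballot (t - s + 2 * u + i) (k + u) := by
    rw [← card_maxAtEnd (by omega), show t - s + 2 * u + i = t by omega]
    congr
    push_cast
    omega
  have hmain := pow_mul_ballot_le (m := t - s) (k := k) (u := u) (v := i) (by omega)
    (by omega) (by
      rw [show 2 * (k : ℤ) - (t - s : ℕ) = n by omega,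
        show ((t - s : ℕ) : ℤ) + 2 * u + i = t by omega]
      exact_mod_cast ht)
  rw [← hu, ← hG, ← hA] at hmain
  exact_mod_cast hmain

lemma two_pow_mul_card_maxAtEnd_inter_belowOne_le {n i t : ℕ} (hi : 1 ≤ i) (h2i : 2 * i ≤ n + 1)
    (ht : 4 * t ≤ n ^ 2) :
    2 ^ t * #(maxAtEnd i t n ∩ belowOne i t) ≤ #(maxAtEnd i t n) * #(belowOne i t) := by
  have hi' : (1 : ℤ) ≤ i := by exact_mod_cast hi
  rw [card_belowOne hi', mul_sum]
  calc 2 ^ t * #(maxAtEnd i t n ∩ belowOne i t)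
      ≤ 2 ^ t * ∑ s ∈ range (t + 1), #(firstZeroAt i s s) * #(maxAtEnd 0 (t - s) n) := by
        gcongr
        exact card_maxAtEnd_inter_belowOne_le hi' t n
    _ = ∑ s ∈ range (t + 1),
          #(firstZeroAt i s s) * 2 ^ (t - s) * (2 ^ s * #(maxAtEnd 0 (t - s) n)) := by
        rw [mul_sum]
        refine sum_congr rfl fun s hs => ?_
        rw [← pow_sub_mul_pow 2 (Nat.le_of_lt_succ (mem_range.mp hs))]
        ring
    _ ≤ ∑ s ∈ range (t + 1), #(maxAtEnd i t n) * (#(firstZeroAt i s s) * 2 ^ (t - s)) := by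
        refine sum_le_sum fun s hs => ?_
        rcases (firstZeroAt i s s).eq_empty_or_nonempty with h0 | hne
        · simp [h0]
        · rw [mul_comm]
          gcongr
          exact two_pow_mul_card_maxAtEnd_le h2i ht (Nat.le_of_lt_succ (mem_range.mp hs)) hne

end StepWalk

open StepWalk in
theorem conditioning_on_low_min_general (n i t : ℕ)
    (hi1 : 1 ≤ i) (hi2 : i ≤ (n + 1) / 2)
    (ht2 : (t : ℝ) ≤ (n : ℝ) ^ 2 / 4) :
    walkCount (i : ℤ) t (fun w => endsAt (n : ℤ) w ∧ maxEq (n : ℤ) w) *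
        walkCount (i : ℤ) t (fun w => ∃ j, w j < 1) ≥
      2 ^ t *
        walkCount (i : ℤ) t
          (fun w => endsAt (n : ℤ) w ∧ maxEq (n : ℤ) w ∧ ∃ j, w j < 1) := by
  have ht : 4 * t ≤ n ^ 2 := by
    have : (4 * t : ℝ) ≤ n ^ 2 := by linarith
    exact_mod_cast this
  rw [walkCount_eq_card _ fun ε => mem_maxAtEnd_iff, walkCount_eq_card _ fun ε => mem_belowOne_iff,
    walkCount_eq_card (maxAtEnd i t n ∩ belowOne i t) fun ε => by
      rw [mem_inter, mem_maxAtEnd_iff, mem_belowOne_iff, and_assoc]]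
  exact two_pow_mul_card_maxAtEnd_inter_belowOne_le hi1 (by omega) ht

/-- For a positive integer `n`, an integer `1 ≤ i ≤ ⌈n/2⌉`, and a
positive integer `t ≤ n²/4` with `t ≡ n - i (mod 2)`: with
`A = #{w : w(t) = n, MAX(w) = n}`, `F = #{w : MIN(w) < 1}`, and
`A' = #{w : w(t) = n, MAX(w) = n, MIN(w) < 1}` (all walks of length `t` started at `i`),
we have `A · F ≥ 2^t · A'`. -/
theorem conditioning_on_low_min (n i t : ℕ) (hn : 0 < n)
    (hi1 : 1 ≤ i) (hi2 : i ≤ (n + 1) / 2) (ht0 : 0 < t)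
    (ht2 : (t : ℝ) ≤ (n : ℝ) ^ 2 / 4)
    (hpar : (t : ℤ) % 2 = ((n : ℤ) - (i : ℤ)) % 2) :
    walkCount (i : ℤ) t (fun w => endsAt (n : ℤ) w ∧ maxEq (n : ℤ) w) *
        walkCount (i : ℤ) t (fun w => ∃ j, w j < 1) ≥
      2 ^ t *
        walkCount (i : ℤ) t
          (fun w => endsAt (n : ℤ) w ∧ maxEq (n : ℤ) w ∧ ∃ j, w j < 1) :=
  conditioning_on_low_min_general n i t hi1 hi2 ht2
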